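/- Let p be prime, n a positive integer with gcd(n, p) = 1, and R4 = Z_p[u]/(u^4). Let C be a cyclic code of length n over R4 of the form C = <g(x), u·a1(x), u^2·a2(x), u^3·a3(x)> with a3(x) | a2(x) | a1(x) | g(x) | (x^n - 1) in Z_p[x]. Then C is the principal ideal generated by g(x) + u·a1(x) + u^2·a2(x) + u^3·a3(x). -/

import Mathlib

open Polynomial

noncomputable section

/-- `Ru p k` is the ring `R_k = Z_p[u]/(u^k)`. -/
abbrev Ru (p k : ℕ) : Type := Polynomial (ZMod p) ⧸ Ideal.span {(X : Polynomial (ZMod p)) ^ k}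

instance (p k : ℕ) : CommRing (Ru p k) := Ideal.Quotient.commRing _

/-- The element `u` of `Ru p k`. -/
abbrev uR (p k : ℕ) : Ru p k := Ideal.Quotient.mk _ (X : Polynomial (ZMod p))

/-- `Rn p k n` is the ring `R_k[x]/(x^n - 1)`; its ideals are the cyclic codes of length `n`. -/
abbrev Rn (p k n : ℕ) : Type :=
  Polynomial (Ru p k) ⧸ Ideal.span {(X : Polynomial (Ru p k)) ^ n - 1}

/-- The natural ring map `Z_p[x] → R_k[x]/(x^n - 1)`. -/
abbrev liftP (p k n : ℕ) : Polynomial (ZMod p) →+* Rn p k n :=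
  (Ideal.Quotient.mk _).comp (mapRingHom (algebraMap (ZMod p) (Ru p k)))

/-- `u` as an element of `R_k[x]/(x^n - 1)`. -/
abbrev uu (p k n : ℕ) : Rn p k n := Ideal.Quotient.mk _ (C (uR p k))

/-- `x` as an element of `R_k[x]/(x^n - 1)`. -/
abbrev xx (p k n : ℕ) : Rn p k n := Ideal.Quotient.mk _ (X : Polynomial (Ru p k))

/-! Write `G = g + y` with `y = u (a₁ + u a₂ + u² a₃)` nilpotent. Since `x^n - 1` is squarefree,
`g` has a cofactor `h` with `g h = 0` and `s g + t h = 1`, whence `y (1 + s y) = G (s y + t h)`;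
as `1 + s y` is a unit, `y ∈ (G)` and so `(G) = (g, y)`. Repeating this with `a₁` and `a₂` in place
of `g` peels off one generator at a time. -/

namespace Ideal

variable {R : Type*} [CommRing R]

theorem mem_span_singleton_add_of_isNilpotent {a h y : R} (hah : a * h = 0)
    (hcop : IsCoprime a h) (hy : IsNilpotent y) : y ∈ span {a + y} := by
  obtain ⟨s, t, hst⟩ := hcop
  have hunit : IsUnit (1 + s * y) := ((Commute.all s y).isNilpotent_mul_left hy).isUnit_one_add
  have key : y * (1 + s * y) = (a + y) * (s * y + t * h) := by
    linear_combination (-y) * hst - t * hah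
  rw [← mul_unit_mem_iff_mem _ hunit, key]
  exact mul_mem_right _ _ (mem_span_singleton_self _)

theorem span_singleton_add_of_isNilpotent {a h y : R} (hah : a * h = 0)
    (hcop : IsCoprime a h) (hy : IsNilpotent y) : span {a + y} = span {a, y} := by
  rw [← span_pair_add_right, span_pair_comm]
  exact (Submodule.span_insert_eq_span (mem_span_singleton_add_of_isNilpotent hah hcop hy)).symm

theorem span_singleton_mul_add_of_isNilpotent (c : R) {a h y : R} (hah : a * h = 0)
    (hcop : IsCoprime a h) (hy : IsNilpotent y) :
    span {c * (a + y)} = span {c * a} ⊔ span {c * y} := by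
  rw [← span_singleton_mul_span_singleton, span_singleton_add_of_isNilpotent hah hcop hy,
    span_insert, mul_sup, span_singleton_mul_span_singleton, span_singleton_mul_span_singleton]

theorem span_singleton_add_pow_mul_of_isNilpotent {u g a₁ a₂ a₃ h₀ h₁ h₂ : R}
    (hu : IsNilpotent u) (hg : g * h₀ = 0) (hg' : IsCoprime g h₀)
    (ha₁ : a₁ * h₁ = 0) (ha₁' : IsCoprime a₁ h₁) (ha₂ : a₂ * h₂ = 0) (ha₂' : IsCoprime a₂ h₂) :
    span {g + u * a₁ + u ^ 2 * a₂ + u ^ 3 * a₃} = span {g, u * a₁, u ^ 2 * a₂, u ^ 3 * a₃} := by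
  have nil {x : R} : IsNilpotent (u * x) := (Commute.all u x).isNilpotent_mul_right hu
  calc span {g + u * a₁ + u ^ 2 * a₂ + u ^ 3 * a₃}
      = span {1 * (g + u * (a₁ + u * (a₂ + u * a₃)))} := by ring_nf
    _ = span {g} ⊔ span {u * (a₁ + u * (a₂ + u * a₃))} := by
      rw [span_singleton_mul_add_of_isNilpotent 1 hg hg' nil, one_mul, one_mul]
    _ = span {g} ⊔ (span {u * a₁} ⊔ span {u ^ 2 * (a₂ + u * a₃)}) := by
      rw [span_singleton_mul_add_of_isNilpotent u ha₁ ha₁' nil, ← mul_assoc, ← pow_two]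
    _ = span {g} ⊔ (span {u * a₁} ⊔ (span {u ^ 2 * a₂} ⊔ span {u ^ 3 * a₃})) := by
      rw [span_singleton_mul_add_of_isNilpotent (u ^ 2) ha₂ ha₂' nil, ← mul_assoc, ← pow_succ]
    _ = span {g, u * a₁, u ^ 2 * a₂, u ^ 3 * a₃} := by simp only [span_insert]

end Ideal

theorem exists_mul_eq_zero_isCoprime_map {A R : Type*} [CommRing A] [IsBezout A] [CommRing R]
    (φ : A →+* R) {f d : A} (hf : Squarefree f) (hφf : φ f = 0) (hd : d ∣ f) :
    ∃ e, φ d * e = 0 ∧ IsCoprime (φ d) e := by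
  obtain ⟨e, rfl⟩ := hd
  exact ⟨φ e, by rw [← map_mul, hφf], (IsRelPrime.of_squarefree_mul hf).isCoprime.map φ⟩

theorem isNilpotent_uu (p k n : ℕ) : IsNilpotent (uu p k n) :=
  ⟨k, by rw [← map_pow, ← C_pow, ← map_pow, Ideal.Quotient.eq_zero_iff_mem.mpr
    (Ideal.mem_span_singleton_self _), C_0, map_zero]⟩

theorem liftP_X_pow_sub_one (p k n : ℕ) : liftP p k n (X ^ n - 1) = 0 := by
  simp

theorem stmt2_general (p n : ℕ) (hp : p.Prime) (hco : Nat.Coprime n p)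
    (g a1 a2 a3 : Polynomial (ZMod p)) (Ck : Ideal (Rn p 4 n))
    (h21 : a2 ∣ a1) (h1g : a1 ∣ g)
    (hg : g ∣ (X : Polynomial (ZMod p)) ^ n - 1)
    (hC : Ck = Ideal.span {liftP p 4 n g, uu p 4 n * liftP p 4 n a1,
      uu p 4 n ^ 2 * liftP p 4 n a2, uu p 4 n ^ 3 * liftP p 4 n a3}) :
    Ck = Ideal.span {liftP p 4 n g + uu p 4 n * liftP p 4 n a1 +
      uu p 4 n ^ 2 * liftP p 4 n a2 + uu p 4 n ^ 3 * liftP p 4 n a3} := by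
  have : Fact p.Prime := ⟨hp⟩
  have hn : (n : ZMod p) ≠ 0 := by
    rw [Ne, ZMod.natCast_eq_zero_iff]
    exact (Nat.Prime.coprime_iff_not_dvd hp).mp hco.symm
  have hsq := (X_pow_sub_one_separable_iff.mpr hn).squarefree
  have split {d : Polynomial (ZMod p)} (hd : d ∣ X ^ n - 1) :=
    exists_mul_eq_zero_isCoprime_map (R := Rn p 4 n) (liftP p 4 n) hsq
      (liftP_X_pow_sub_one p 4 n) hd
  obtain ⟨h₀, hg₀, hg₀'⟩ := split hg
  obtain ⟨h₁, ha₁, ha₁'⟩ := split (h1g.trans hg)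
  obtain ⟨h₂, ha₂, ha₂'⟩ := split (h21.trans (h1g.trans hg))
  rw [hC, Ideal.span_singleton_add_pow_mul_of_isNilpotent (isNilpotent_uu p 4 n) hg₀ hg₀' ha₁ ha₁'
    ha₂ ha₂']

/-- Over `R_4 = Z_p[u]/(u^4)`, if `gcd(n,p) = 1` and
`C = <g(x), u a1(x), u^2 a2(x), u^3 a3(x)>` with `a3 ∣ a2 ∣ a1 ∣ g ∣ x^n - 1` in `Z_p[x]`,
then `C = <g(x) + u a1(x) + u^2 a2(x) + u^3 a3(x)>`. -/
theorem stmt2 (p n : ℕ) (hp : p.Prime) (hn : 0 < n) (hco : Nat.Coprime n p)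
    (g a1 a2 a3 : Polynomial (ZMod p)) (Ck : Ideal (Rn p 4 n))
    (h32 : a3 ∣ a2) (h21 : a2 ∣ a1) (h1g : a1 ∣ g)
    (hg : g ∣ (X : Polynomial (ZMod p)) ^ n - 1)
    (hC : Ck = Ideal.span {liftP p 4 n g, uu p 4 n * liftP p 4 n a1,
      uu p 4 n ^ 2 * liftP p 4 n a2, uu p 4 n ^ 3 * liftP p 4 n a3}) :
    Ck = Ideal.span {liftP p 4 n g + uu p 4 n * liftP p 4 n a1 +
      uu p 4 n ^ 2 * liftP p 4 n a2 + uu p 4 n ^ 3 * liftP p 4 n a3} :=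
  stmt2_general p n hp hco g a1 a2 a3 Ck h21 h1g hg hC
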